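/- arXiv:2209.00686 — 6 statements merged into one kernel-verified Lean document; each statement's English description precedes it below -/
import Mathlib

section
/- Let κ be a closure operator on subsets of L and let D ⊆ L. Then D avoids partial loss if and only if D has a κ-coherent superset; and in that case the natural extension E_κ(D) := κ(D ∪ L⁺) is the smallest κ-coherent superset of D: it is κ-coherent, contains D, and is contained in every κ-coherent superset of D. -/
open Set

/-- The set of gambles: bounded real-valued functions on `Ω`. -/
def Gambles (Ω : Type*) : Set (Ω → ℝ) := {f | ∃ M : ℝ, ∀ ω, |f ω| ≤ M}

/-- `L⁺`: the positive gambles. -/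
def Lpos (Ω : Type*) : Set (Ω → ℝ) := {f ∈ Gambles Ω | 0 ≤ f ∧ f ≠ 0}

/-- `L⁻₀`: the nonpositive gambles. -/
def Lneg0 (Ω : Type*) : Set (Ω → ℝ) := {f ∈ Gambles Ω | f ≤ 0}

/-- A closure operator on the subsets of the set of gambles. -/
structure IsClosureOp (Ω : Type*) (κ : Set (Ω → ℝ) → Set (Ω → ℝ)) : Prop where
  maps_to : ∀ D ⊆ Gambles Ω, κ D ⊆ Gambles Ω
  extensive : ∀ D ⊆ Gambles Ω, D ⊆ κ D
  mono : ∀ ⦃D D' : Set (Ω → ℝ)⦄, D ⊆ Gambles Ω → D' ⊆ Gambles Ω → D ⊆ D' → κ D ⊆ κ D'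
  idem : ∀ D ⊆ Gambles Ω, κ (κ D) = κ D

/-- Natural extension `E_κ(D) = κ(D ∪ L⁺)`. -/
def natExt {Ω : Type*} (κ : Set (Ω → ℝ) → Set (Ω → ℝ)) (D : Set (Ω → ℝ)) : Set (Ω → ℝ) :=
  κ (D ∪ Lpos Ω)

/-- `D` avoids partial loss: `L⁻₀ ∩ E_κ(D) = ∅`. -/
def AvoidsPartialLoss {Ω : Type*} (κ : Set (Ω → ℝ) → Set (Ω → ℝ)) (D : Set (Ω → ℝ)) : Prop :=
  Lneg0 Ω ∩ natExt κ D = ∅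

/-- `D` is κ-coherent relative to `Q`. -/
def CoherentRel {Ω : Type*} (κ : Set (Ω → ℝ) → Set (Ω → ℝ)) (Q D : Set (Ω → ℝ)) : Prop :=
  AvoidsPartialLoss κ D ∧ Q ∩ natExt κ D ⊆ D

/-- `D` is κ-coherent: `κ(D ∪ L⁺) = D` and `D ∩ L⁻₀ = ∅`. -/
def Coherent {Ω : Type*} (κ : Set (Ω → ℝ) → Set (Ω → ℝ)) (D : Set (Ω → ℝ)) : Prop :=
  D ⊆ Gambles Ω ∧ κ (D ∪ Lpos Ω) = D ∧ D ∩ Lneg0 Ω = ∅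

/-- A set of gambles is closed under dominance. -/
def ClosedUnderDominance {Ω : Type*} (G : Set (Ω → ℝ)) : Prop :=
  G = {g | g ∈ Gambles Ω ∧ ∃ f ∈ G, f ≤ g}

/-- `K_d`: closure operators all of whose coherent sets are closed under dominance. -/
def InKd {Ω : Type*} (κ : Set (Ω → ℝ) → Set (Ω → ℝ)) : Prop :=
  IsClosureOp Ω κ ∧ ∀ D : Set (Ω → ℝ), Coherent κ D → ClosedUnderDominance D

/-- Lower prevision induced by `D`: `P_D(f) = sup {μ : f - μ ∈ D}`. -/
noncomputable def lowPrev {Ω : Type*} (D : Set (Ω → ℝ)) (f : Ω → ℝ) : ℝ :=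
  sSup {μ : ℝ | (f - fun _ => μ) ∈ D}

/-- Upper prevision induced by `D`: `Q_D(f) = inf {μ : μ - f ∈ D}`. -/
noncomputable def upPrev {Ω : Type*} (D : Set (Ω → ℝ)) (f : Ω → ℝ) : ℝ :=
  sInf {μ : ℝ | ((fun _ => μ) - f) ∈ D}

lemma Lpos_subset_gambles {Ω : Type*} : Lpos Ω ⊆ Gambles Ω := fun _ hf => hf.1

lemma union_Lpos_subset_gambles {Ω : Type*} {D : Set (Ω → ℝ)} (hD : D ⊆ Gambles Ω) :
    D ∪ Lpos Ω ⊆ Gambles Ω :=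
  union_subset hD Lpos_subset_gambles

lemma Coherent.natExt_eq {Ω : Type*} {κ : Set (Ω → ℝ) → Set (Ω → ℝ)} {D : Set (Ω → ℝ)}
    (hc : Coherent κ D) : natExt κ D = D :=
  hc.2.1

lemma Coherent.avoidsPartialLoss {Ω : Type*} {κ : Set (Ω → ℝ) → Set (Ω → ℝ)}
    {D : Set (Ω → ℝ)} (hc : Coherent κ D) : AvoidsPartialLoss κ D := by
  rw [AvoidsPartialLoss, hc.natExt_eq, inter_comm]
  exact hc.2.2

namespace IsClosureOp

variable {Ω : Type*} {κ : Set (Ω → ℝ) → Set (Ω → ℝ)} (hκ : IsClosureOp Ω κ)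
  {D : Set (Ω → ℝ)} (hD : D ⊆ Gambles Ω)
include hκ hD

lemma union_Lpos_subset_natExt : D ∪ Lpos Ω ⊆ natExt κ D :=
  hκ.extensive _ (union_Lpos_subset_gambles hD)

lemma subset_natExt : D ⊆ natExt κ D :=
  subset_union_left.trans (hκ.union_Lpos_subset_natExt hD)

lemma natExt_mono {D' : Set (Ω → ℝ)} (hD' : D' ⊆ Gambles Ω) (h : D ⊆ D') :
    natExt κ D ⊆ natExt κ D' :=
  hκ.mono (union_Lpos_subset_gambles hD) (union_Lpos_subset_gambles hD')
    (union_subset_union_left _ h)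

lemma natExt_subset_of_coherent {D' : Set (Ω → ℝ)} (hc : Coherent κ D') (h : D ⊆ D') :
    natExt κ D ⊆ D' :=
  hc.natExt_eq ▸ hκ.natExt_mono hD hc.1 h

lemma avoidsPartialLoss_of_subset {D' : Set (Ω → ℝ)} (hD' : D' ⊆ Gambles Ω)
    (h : D ⊆ D') (h' : AvoidsPartialLoss κ D') : AvoidsPartialLoss κ D :=
  subset_empty_iff.mp (h' ▸ inter_subset_inter_right _ (hκ.natExt_mono hD hD' h))

lemma natExt_natExt : natExt κ (natExt κ D) = natExt κ D := by
  have hL : Lpos Ω ⊆ natExt κ D := subset_union_right.trans (hκ.union_Lpos_subset_natExt hD)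
  rw [natExt, union_eq_self_of_subset_right hL]
  exact hκ.idem _ (union_Lpos_subset_gambles hD)

lemma coherent_natExt (h : AvoidsPartialLoss κ D) : Coherent κ (natExt κ D) :=
  ⟨hκ.maps_to _ (union_Lpos_subset_gambles hD), hκ.natExt_natExt hD, inter_comm _ _ ▸ h⟩

end IsClosureOp

theorem stmt1_general {Ω : Type*} (κ : Set (Ω → ℝ) → Set (Ω → ℝ))
    (hκ : IsClosureOp Ω κ) (D : Set (Ω → ℝ)) (hD : D ⊆ Gambles Ω) :
    (AvoidsPartialLoss κ D ↔ ∃ D' : Set (Ω → ℝ), D ⊆ D' ∧ Coherent κ D') ∧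
    (AvoidsPartialLoss κ D →
      Coherent κ (natExt κ D) ∧ D ⊆ natExt κ D ∧
        ∀ D' : Set (Ω → ℝ), Coherent κ D' → D ⊆ D' → natExt κ D ⊆ D') := by
  have minimal : ∀ D', Coherent κ D' → D ⊆ D' → natExt κ D ⊆ D' :=
    fun _ hc => hκ.natExt_subset_of_coherent hD hc
  refine ⟨⟨fun h => ⟨natExt κ D, hκ.subset_natExt hD, hκ.coherent_natExt hD h⟩, ?_⟩,
    fun h => ⟨hκ.coherent_natExt hD h, hκ.subset_natExt hD, minimal⟩⟩
  rintro ⟨D', hDD', hc⟩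
  exact hκ.avoidsPartialLoss_of_subset hD hc.1 hDD' hc.avoidsPartialLoss

/-- `D` avoids partial loss iff it has a κ-coherent superset, and in
that case `E_κ(D)` is the smallest κ-coherent superset of `D`. -/
theorem stmt1 {Ω : Type*} [Nonempty Ω] (κ : Set (Ω → ℝ) → Set (Ω → ℝ))
    (hκ : IsClosureOp Ω κ) (D : Set (Ω → ℝ)) (hD : D ⊆ Gambles Ω) :
    (AvoidsPartialLoss κ D ↔ ∃ D' : Set (Ω → ℝ), D ⊆ D' ∧ Coherent κ D') ∧
    (AvoidsPartialLoss κ D →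
      Coherent κ (natExt κ D) ∧ D ⊆ natExt κ D ∧
        ∀ D' : Set (Ω → ℝ), Coherent κ D' → D ⊆ D' → natExt κ D ⊆ D') :=
  stmt1_general κ hκ D hD
end

section
/- Let Λ be a family of subsets of L, define κ_Λ(D) := ⋂{D' ∈ Λ : D ⊆ D'} when at least one member of Λ contains D and κ_Λ(D) := L otherwise, and let Λ_{κ_Λ} denote the family of κ_Λ-coherent sets. Then κ_Λ belongs to K_d and Λ_{κ_Λ} = Λ if and only if: every D' ∈ Λ is closed under dominance, satisfies L⁺ ⊆ D' and D' ∩ L⁻₀ = ∅, and Λ is closed under arbitrary nonempty intersections (the intersection of any nonempty subfamily of Λ belongs to Λ). -/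
open Set

-- The operator induced by a family `Λ` of subsets of the gambles:
-- `κ_Λ(D)` is the intersection of the members of `Λ` containing `D` if there is one,
-- and the whole set of gambles otherwise.
open Classical in
noncomputable def kLam {Ω : Type*} (Λ : Set (Set (Ω → ℝ))) (D : Set (Ω → ℝ)) :
    Set (Ω → ℝ) :=
  if ∃ D' ∈ Λ, D ⊆ D' then ⋂₀ {D' | D' ∈ Λ ∧ D ⊆ D'} else Gambles Ω

section

variable {Ω : Type*}

lemma zero_mem_gambles : (0 : Ω → ℝ) ∈ Gambles Ω := ⟨0, fun _ => by simp⟩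

lemma zero_mem_lneg0 : (0 : Ω → ℝ) ∈ Lneg0 Ω := ⟨zero_mem_gambles, le_rfl⟩

lemma lpos_subset_gambles : Lpos Ω ⊆ Gambles Ω := fun _ hf => hf.1

lemma ClosedUnderDominance.subset_gambles {G : Set (Ω → ℝ)} (h : ClosedUnderDominance G) :
    G ⊆ Gambles Ω := fun _ hg => (h ▸ hg : _ ∈ {g | g ∈ Gambles Ω ∧ _}).1

section Coherent

variable {κ : Set (Ω → ℝ) → Set (Ω → ℝ)} {D : Set (Ω → ℝ)}

lemma Coherent.lpos_subset (hκ : IsClosureOp Ω κ) (hD : Coherent κ D) : Lpos Ω ⊆ D := by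
  have hext := hκ.extensive _ (union_subset hD.1 lpos_subset_gambles)
  rw [hD.2.1] at hext
  exact (union_subset_iff.mp hext).2

lemma Coherent.of_lpos_subset (hG : D ⊆ Gambles Ω) (hpos : Lpos Ω ⊆ D) (hfix : κ D = D)
    (hdisj : D ∩ Lneg0 Ω = ∅) : Coherent κ D :=
  ⟨hG, by rwa [union_eq_self_of_subset_right hpos], hdisj⟩

end Coherent

namespace kLam

variable {Λ : Set (Set (Ω → ℝ))} {D D' : Set (Ω → ℝ)}

lemma of_exists (h : ∃ E ∈ Λ, D ⊆ E) : kLam Λ D = ⋂₀ {E | E ∈ Λ ∧ D ⊆ E} := if_pos h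

lemma of_not_exists (h : ¬ ∃ E ∈ Λ, D ⊆ E) : kLam Λ D = Gambles Ω := if_neg h

lemma subset_self (hD : D ⊆ Gambles Ω) : D ⊆ kLam Λ D := by
  by_cases h : ∃ E ∈ Λ, D ⊆ E
  · rw [of_exists h]
    exact subset_sInter fun _ hE => hE.2
  · rwa [of_not_exists h]

lemma sInter_eq {H : Set (Set (Ω → ℝ))} (hH : H ⊆ Λ) (hne : H.Nonempty) :
    kLam Λ (⋂₀ H) = ⋂₀ H := by
  obtain ⟨E, hE⟩ := hne
  rw [of_exists ⟨E, hH hE, sInter_subset_of_mem hE⟩]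
  exact Subset.antisymm
    (subset_sInter fun F hF => sInter_subset_of_mem ⟨hH hF, sInter_subset_of_mem hF⟩)
    (subset_sInter fun _ hF => hF.2)

lemma eq_self_of_mem (hD : D ∈ Λ) : kLam Λ D = D := by
  simpa using sInter_eq (singleton_subset_iff.mpr hD) (singleton_nonempty D)

lemma coherent_sInter (hκ : IsClosureOp Ω (kLam Λ)) {H : Set (Set (Ω → ℝ))} (hH : H ⊆ Λ)
    (hne : H.Nonempty) (hcoh : ∀ E ∈ H, Coherent (kLam Λ) E) : Coherent (kLam Λ) (⋂₀ H) := by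
  obtain ⟨E, hE⟩ := hne
  have hsub : ⋂₀ H ⊆ E := sInter_subset_of_mem hE
  refine Coherent.of_lpos_subset (hsub.trans (hcoh E hE).1)
    (subset_sInter fun F hF => (hcoh F hF).lpos_subset hκ) (sInter_eq hH ⟨E, hE⟩) ?_
  exact subset_empty_iff.mp ((hcoh E hE).2.2 ▸ inter_subset_inter_left _ hsub)

section Bounded

variable (hΛ : ∀ E ∈ Λ, E ⊆ Gambles Ω)
include hΛ

lemma subset_gambles : kLam Λ D ⊆ Gambles Ω := by
  by_cases h : ∃ E ∈ Λ, D ⊆ E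
  · obtain ⟨E, hE, hDE⟩ := h
    rw [of_exists ⟨E, hE, hDE⟩]
    exact (sInter_subset_of_mem (show E ∈ {F | F ∈ Λ ∧ D ⊆ F} from ⟨hE, hDE⟩)).trans (hΛ E hE)
  · rw [of_not_exists h]

lemma gambles_eq : kLam Λ (Gambles Ω) = Gambles Ω :=
  Subset.antisymm (subset_gambles hΛ) (subset_self Subset.rfl)

lemma mono (hDD' : D ⊆ D') : kLam Λ D ⊆ kLam Λ D' := by
  by_cases h : ∃ E ∈ Λ, D' ⊆ E
  · obtain ⟨E, hE, hD'E⟩ := h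
    rw [of_exists ⟨E, hE, hD'E⟩, of_exists ⟨E, hE, hDD'.trans hD'E⟩]
    exact subset_sInter fun F hF => sInter_subset_of_mem ⟨hF.1, hDD'.trans hF.2⟩
  · rw [of_not_exists h]
    exact subset_gambles hΛ

end Bounded

section IntersectionClosed

variable (hint : ∀ H ⊆ Λ, H.Nonempty → ⋂₀ H ∈ Λ)
include hint

lemma mem_or_eq_gambles : kLam Λ D ∈ Λ ∨ kLam Λ D = Gambles Ω := by
  by_cases h : ∃ E ∈ Λ, D ⊆ E
  · exact Or.inl (of_exists h ▸ hint _ (fun _ hF => hF.1) h)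
  · exact Or.inr (of_not_exists h)

-- The case `kLam Λ (D ∪ Lpos Ω) = Gambles Ω` is excluded because `0 ∈ Gambles Ω ∩ Lneg0 Ω`.
lemma mem_of_coherent (hD : Coherent (kLam Λ) D) : D ∈ Λ := by
  obtain ⟨-, hfix, hdisj⟩ := hD
  rcases mem_or_eq_gambles (D := D ∪ Lpos Ω) hint with hmem | hall
  · rwa [hfix] at hmem
  · rw [hfix] at hall
    have h0 : (0 : Ω → ℝ) ∈ D ∩ Lneg0 Ω := ⟨hall ▸ zero_mem_gambles, zero_mem_lneg0⟩
    simp [hdisj] at h0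

lemma isClosureOp (hΛ : ∀ E ∈ Λ, E ⊆ Gambles Ω) : IsClosureOp Ω (kLam Λ) where
  maps_to _ _ := subset_gambles hΛ
  extensive _ := subset_self
  mono _ _ _ _ := mono hΛ
  idem D _ := by
    rcases mem_or_eq_gambles (D := D) hint with hmem | hall
    · exact eq_self_of_mem hmem
    · rw [hall, gambles_eq hΛ]

end IntersectionClosed

end kLam

end

theorem stmt5_general {Ω : Type*} (Λ : Set (Set (Ω → ℝ))) :
    (InKd (kLam Λ) ∧ {D : Set (Ω → ℝ) | Coherent (kLam Λ) D} = Λ) ↔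
      ((∀ D' ∈ Λ, ClosedUnderDominance D' ∧ Lpos Ω ⊆ D' ∧ D' ∩ Lneg0 Ω = ∅) ∧
        ∀ H ⊆ Λ, H.Nonempty → ⋂₀ H ∈ Λ) := by
  constructor
  · rintro ⟨⟨hclosure, hdom⟩, hcoh⟩
    have hcohΛ : ∀ D ∈ Λ, Coherent (kLam Λ) D := fun D hD => (hcoh ▸ hD :)
    refine ⟨fun D hD => ⟨hdom D (hcohΛ D hD), (hcohΛ D hD).lpos_subset hclosure,
      (hcohΛ D hD).2.2⟩, fun H hH hne => ?_⟩
    exact hcoh ▸ kLam.coherent_sInter hclosure hH hne fun E hE => hcohΛ E (hH hE)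
  · rintro ⟨hmem, hint⟩
    have hΛ : ∀ D ∈ Λ, D ⊆ Gambles Ω := fun D hD => (hmem D hD).1.subset_gambles
    have hcoh : {D : Set (Ω → ℝ) | Coherent (kLam Λ) D} = Λ := by
      ext D
      refine ⟨kLam.mem_of_coherent hint, fun hD => ?_⟩
      obtain ⟨-, hpos, hdisj⟩ := hmem D hD
      exact Coherent.of_lpos_subset (hΛ D hD) hpos (kLam.eq_self_of_mem hD) hdisj
    exact ⟨⟨kLam.isClosureOp hint hΛ, fun D hD => (hmem D (hcoh ▸ hD)).1⟩, hcoh⟩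

/-- `κ_Λ` belongs to `K_d` and its family of coherent sets is exactly `Λ`
iff every member of `Λ` is closed under dominance, contains `L⁺`, is disjoint from
`L⁻₀`, and `Λ` is closed under arbitrary nonempty intersections. -/
theorem stmt5 {Ω : Type*} [Nonempty Ω] (Λ : Set (Set (Ω → ℝ))) :
    (InKd (kLam Λ) ∧ {D : Set (Ω → ℝ) | Coherent (kLam Λ) D} = Λ) ↔
      ((∀ D' ∈ Λ, ClosedUnderDominance D' ∧ Lpos Ω ⊆ D' ∧ D' ∩ Lneg0 Ω = ∅) ∧
        ∀ H ⊆ Λ, H.Nonempty → ⋂₀ H ∈ Λ) :=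
  stmt5_general Λ
end

section
/- Let κ₂ be the closure operator defined by κ₂(D) := {f₁ + … + f_n : n ≥ 1, f₁, …, f_n ∈ D}. A κ₂-coherent set D ⊆ L is κ₂-maximal (it has no κ₂-coherent strict superset) if and only if it is κ₂-decisive (for every gamble f ≠ 0 exactly one of f and −f belongs to D). -/
open Set

/-- The closure operator `κ₂`, mapping `D` to the set of all finite sums (with at
least one summand) of elements of `D`. -/
def k2 {Ω : Type*} (D : Set (Ω → ℝ)) : Set (Ω → ℝ) :=
  {g | ∃ l : List (Ω → ℝ), l ≠ [] ∧ (∀ f ∈ l, f ∈ D) ∧ g = l.sum}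

/-! If `f` and `-f` both lie outside a maximal coherent `D`, then adjoining either one to `D`
must produce a nonpositive finite sum `n • f + d ≤ 0` (resp. `m • (-f) + d' ≤ 0`) with `d, d'` in
`D ∪ {0}`. By dominance this puts `n • (-f)` and `m • f` in `D`, whose multiples
`m • n • (-f)` and `n • m • f` add up to `0 ∈ D`, a contradiction. Conversely, a decisive `D`
cannot be enlarged: any new `g` has `-g ∈ D`, and `g + (-g) = 0`. -/

section

variable {Ω : Type*}

theorem add_mem_gambles {f g : Ω → ℝ} (hf : f ∈ Gambles Ω) (hg : g ∈ Gambles Ω) :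
    f + g ∈ Gambles Ω := by
  obtain ⟨M, hM⟩ := hf
  obtain ⟨N, hN⟩ := hg
  exact ⟨M + N, fun ω => (abs_add_le _ _).trans (add_le_add (hM ω) (hN ω))⟩

theorem neg_mem_gambles {f : Ω → ℝ} (hf : f ∈ Gambles Ω) : -f ∈ Gambles Ω := by
  obtain ⟨M, hM⟩ := hf
  exact ⟨M, fun ω => by simpa using hM ω⟩

section k2

variable {D : Set (Ω → ℝ)}

theorem subset_k2 : D ⊆ k2 D :=
  fun f hf => ⟨[f], List.cons_ne_nil _ _, by simpa using hf, by simp⟩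

theorem k2_mono {D' : Set (Ω → ℝ)} (h : D ⊆ D') : k2 D ⊆ k2 D' := by
  rintro _ ⟨l, hl, hlD, rfl⟩
  exact ⟨l, hl, fun f hf => h (hlD f hf), rfl⟩

theorem add_mem_k2 {a b : Ω → ℝ} (ha : a ∈ k2 D) (hb : b ∈ k2 D) : a + b ∈ k2 D := by
  obtain ⟨l, hl, hlD, rfl⟩ := ha
  obtain ⟨l', -, hlD', rfl⟩ := hb
  refine ⟨l ++ l', by simp [hl], fun f hf => ?_, List.sum_append.symm⟩
  exact (List.mem_append.mp hf).elim (hlD f) (hlD' f)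

theorem k2_subset_of_add_mem {S : Set (Ω → ℝ)} (hDS : D ⊆ S)
    (hS : ∀ a ∈ S, ∀ b ∈ S, a + b ∈ S) : k2 D ⊆ S := by
  rintro _ ⟨l, hl, hlD, rfl⟩
  induction l with
  | nil => exact absurd rfl hl
  | cons a l ih =>
    have ha : a ∈ S := hDS (hlD a List.mem_cons_self)
    rcases eq_or_ne l [] with rfl | hl'
    · simpa using ha
    · rw [List.sum_cons]
      exact hS a ha _ (ih hl' fun f hf => hlD f (List.mem_cons_of_mem a hf))

theorem k2_k2 : k2 (k2 D) = k2 D :=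
  (k2_subset_of_add_mem Subset.rfl fun _ ha _ hb => add_mem_k2 ha hb).antisymm subset_k2

theorem k2_subset_gambles (h : D ⊆ Gambles Ω) : k2 D ⊆ Gambles Ω :=
  k2_subset_of_add_mem h fun _ ha _ hb => add_mem_gambles ha hb

theorem mem_k2_insert {f g : Ω → ℝ} (hD : ∀ a ∈ D, ∀ b ∈ D, a + b ∈ D)
    (hg : g ∈ k2 (insert f D)) :
    g ∈ D ∨ ∃ n ≠ 0, ∃ d ∈ insert 0 D, g = n • f + d := by
  have hD₀ : ∀ a ∈ insert 0 D, ∀ b ∈ insert 0 D, a + b ∈ insert (0 : Ω → ℝ) D := by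
    rintro a (rfl | ha) b (rfl | hb)
    exacts [by simp, by simp [hb], by simp [ha], Or.inr (hD a ha b hb)]
  refine k2_subset_of_add_mem (S := {g | g ∈ D ∨ ∃ n ≠ 0, ∃ d ∈ insert 0 D, g = n • f + d})
    ?_ ?_ hg
  · rintro a (rfl | ha)
    exacts [Or.inr ⟨1, one_ne_zero, 0, mem_insert _ _, by simp⟩, Or.inl ha]
  · rintro a (ha | ⟨n, hn, d, hd, rfl⟩) b (hb | ⟨m, hm, e, he, rfl⟩)
    · exact Or.inl (hD a ha b hb)
    · exact Or.inr ⟨m, hm, a + e, hD₀ a (Or.inr ha) e he, by abel⟩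
    · exact Or.inr ⟨n, hn, d + b, hD₀ d hd b (Or.inr hb), by abel⟩
    · exact Or.inr ⟨n + m, by omega, d + e, hD₀ d hd e he, by module⟩

end k2

namespace Coherent

variable {D : Set (Ω → ℝ)}

theorem lpos_subset_s7 (hD : Coherent k2 D) : Lpos Ω ⊆ D :=
  hD.2.1 ▸ subset_k2.trans (k2_mono subset_union_right)

theorem add_mem (hD : Coherent k2 D) {a b : Ω → ℝ} (ha : a ∈ D) (hb : b ∈ D) : a + b ∈ D :=
  hD.2.1 ▸ k2_mono subset_union_left (add_mem_k2 (subset_k2 ha) (subset_k2 hb))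

theorem not_le_zero (hD : Coherent k2 D) {g : Ω → ℝ} (hg : g ∈ D) : ¬ g ≤ 0 := fun hle =>
  (hD.2.2.subset ⟨hg, hD.1 hg, hle⟩ : g ∈ (∅ : Set (Ω → ℝ)))

theorem nsmul_mem (hD : Coherent k2 D) {f : Ω → ℝ} (hf : f ∈ D) {n : ℕ} (hn : n ≠ 0) :
    n • f ∈ D := by
  induction n with
  | zero => exact absurd rfl hn
  | succ n ih =>
    rcases eq_or_ne n 0 with rfl | hn'
    · simpa using hf
    · rw [succ_nsmul]
      exact hD.add_mem (ih hn') hf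

theorem add_nonneg_mem (hD : Coherent k2 D) {d h : Ω → ℝ} (hd : d ∈ D) (hh : h ∈ Gambles Ω)
    (h0 : 0 ≤ h) : d + h ∈ D := by
  rcases eq_or_ne h 0 with rfl | hne
  · simpa using hd
  · exact hD.add_mem hd (hD.lpos_subset_s7 ⟨hh, h0, hne⟩)

theorem nsmul_neg_not_mem (hD : Coherent k2 D) {f : Ω → ℝ} {m n : ℕ} (hm : m ≠ 0) (hn : n ≠ 0)
    (hmf : m • f ∈ D) : n • (-f) ∉ D := fun hnf => by
  have h := hD.add_mem (hD.nsmul_mem hmf hn) (hD.nsmul_mem hnf hm)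
  have h0 : n • m • f + m • n • (-f) = 0 := by module
  exact hD.not_le_zero (h0 ▸ h) le_rfl

theorem neg_not_mem (hD : Coherent k2 D) {f : Ω → ℝ} (hf : f ∈ D) : -f ∉ D := by
  simpa using hD.nsmul_neg_not_mem one_ne_zero one_ne_zero (f := f) (by simpa using hf)

theorem k2_insert (hD : Coherent k2 D) {f : Ω → ℝ} (hf : f ∈ Gambles Ω)
    (hloss : k2 (insert f D) ∩ Lneg0 Ω = ∅) : Coherent k2 (k2 (insert f D)) := by
  have hins : insert f D ⊆ Gambles Ω := insert_subset hf hD.1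
  have hlpos : Lpos Ω ⊆ k2 (insert f D) :=
    hD.lpos_subset_s7.trans ((subset_insert f D).trans subset_k2)
  exact ⟨k2_subset_gambles hins, by rw [union_eq_self_of_subset_right hlpos, k2_k2], hloss⟩

theorem exists_nsmul_neg_mem (hD : Coherent k2 D) {f g : Ω → ℝ} (hf0 : f ≠ 0)
    (hg : g ∈ k2 (insert f D)) (hgneg : g ∈ Lneg0 Ω) : ∃ n ≠ 0, n • (-f) ∈ D := by
  obtain ⟨hgG, hgle⟩ := hgneg
  rcases mem_k2_insert (fun a ha b hb => hD.add_mem ha hb) hg with hgD | ⟨n, hn, d, hd, rfl⟩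
  · exact absurd hgle (hD.not_le_zero hgD)
  refine ⟨n, hn, ?_⟩
  have hsum : n • (-f) = d + -(n • f + d) := by module
  have hng : 0 ≤ -(n • f + d) := neg_nonneg.mpr hgle
  rcases hd with rfl | hd
  · have hne : n • (-f) ≠ 0 := smul_ne_zero hn (neg_ne_zero.mpr hf0)
    rw [hsum, zero_add] at hne ⊢
    exact hD.lpos_subset_s7 ⟨neg_mem_gambles hgG, hng, hne⟩
  · exact hsum ▸ hD.add_nonneg_mem hd (neg_mem_gambles hgG) hng

theorem exists_nsmul_neg_mem_of_maximal (hD : Coherent k2 D)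
    (hmax : ¬ ∃ D' : Set (Ω → ℝ), Coherent k2 D' ∧ D ⊂ D') {f : Ω → ℝ} (hf : f ∈ Gambles Ω)
    (hf0 : f ≠ 0) (hfD : f ∉ D) : ∃ n ≠ 0, n • (-f) ∈ D := by
  obtain ⟨g, hg, hgneg⟩ : (k2 (insert f D) ∩ Lneg0 Ω).Nonempty := by
    refine nonempty_iff_ne_empty.mpr fun hloss => hmax ⟨_, hD.k2_insert hf hloss, ?_⟩
    exact ssubset_iff_subset_ne.mpr ⟨(subset_insert f D).trans subset_k2,
      fun h => hfD (h ▸ subset_k2 (mem_insert f D))⟩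
  exact hD.exists_nsmul_neg_mem hf0 hg hgneg

end Coherent

end

theorem stmt7_general {Ω : Type*} (D : Set (Ω → ℝ)) (hD : Coherent k2 D) :
    (¬ ∃ D' : Set (Ω → ℝ), Coherent k2 D' ∧ D ⊂ D') ↔
      (∀ f ∈ Gambles Ω, f ≠ 0 → Xor' (f ∈ D) (-f ∈ D)) := by
  constructor
  · intro hmax f hf hf0
    refine (xor_iff_or_and_not_and _ _).mpr ⟨?_, fun h => hD.neg_not_mem h.1 h.2⟩
    by_contra! ⟨hfD, hnfD⟩
    obtain ⟨n, hn, hnf⟩ := hD.exists_nsmul_neg_mem_of_maximal hmax hf hf0 hfD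
    obtain ⟨m, hm, hmf⟩ :=
      hD.exists_nsmul_neg_mem_of_maximal hmax (neg_mem_gambles hf) (neg_ne_zero.mpr hf0) hnfD
    rw [neg_neg] at hmf
    exact hD.nsmul_neg_not_mem hm hn hmf hnf
  · rintro hdec ⟨D', hD', hDD'⟩
    obtain ⟨g, hgD', hgD⟩ := exists_of_ssubset hDD'
    have hg0 : g ≠ 0 := fun h => hD'.not_le_zero hgD' h.le
    have hng : -g ∈ D := (Xor.or (hdec g (hD'.1 hgD') hg0)).resolve_left hgD
    exact hD'.neg_not_mem hgD' (hDD'.subset hng)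

/-- a κ₂-coherent set is κ₂-maximal (no κ₂-coherent strict superset)
iff it is κ₂-decisive (for every gamble `f ≠ 0`, exactly one of `f`, `-f` is in `D`). -/
theorem stmt7 {Ω : Type*} [Nonempty Ω] (D : Set (Ω → ℝ)) (hD : Coherent k2 D) :
    (¬ ∃ D' : Set (Ω → ℝ), Coherent k2 D' ∧ D ⊂ D') ↔
      (∀ f ∈ Gambles Ω, f ≠ 0 → Xor' (f ∈ D) (-f ∈ D)) :=
  stmt7_general D hD
end

section
/- Let 𝓑 be a partition of Ω and let κ be a closure operator in K_d such that E_κ(G) ⊆ E_{κ₁}(G) for every G ⊆ L, where κ₁(G) := posi(G). Let D_𝓑 ⊆ L_𝓑 be κ₁-coherent relative to L_𝓑, for each B ∈ 𝓑 let D|B ⊆ L|B be κ₁-coherent relative to L|B, and set D|𝓑 := {f ∈ L : f ≠ 0 and for every B ∈ 𝓑, 1_B·f ∈ D|B ∪ {0}}. Then the marginal extension D' := E_κ(D_𝓑 ∪ D|𝓑) satisfies D' ∩ L_𝓑 = D_𝓑 and D' ∩ L|B = D|B for every B ∈ 𝓑. -/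
open Set

/-- `posi(G)`: positive linear combinations of elements of `G`; this is the linear
closure operator `κ₁`. -/
def posi {Ω : Type*} (G : Set (Ω → ℝ)) : Set (Ω → ℝ) :=
  {g | ∃ (n : ℕ) (f : Fin (n + 1) → Ω → ℝ) (l : Fin (n + 1) → ℝ),
    (∀ i, f i ∈ G) ∧ (∀ i, 0 < l i) ∧ g = ∑ i, l i • f i}

/-- `L_𝓑`: the gambles that are constant on every element of the partition `𝓑`. -/
def Lmeas {Ω : Type*} (𝓑 : Set (Set Ω)) : Set (Ω → ℝ) :=
  {f ∈ Gambles Ω | ∀ B ∈ 𝓑, ∀ ω ∈ B, ∀ ω' ∈ B, f ω = f ω'}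

/-- `L|B`: the gambles vanishing outside `B`, i.e. with `f = 1_B·f`. -/
def Lcond {Ω : Type*} (B : Set Ω) : Set (Ω → ℝ) :=
  {f ∈ Gambles Ω | f = B.indicator f}

/-- `D|𝓑`: the nonzero gambles `f` with `1_B·f ∈ D|B ∪ {0}` for every `B ∈ 𝓑`. -/
def condAgg {Ω : Type*} (𝓑 : Set (Set Ω)) (Dc : Set Ω → Set (Ω → ℝ)) : Set (Ω → ℝ) :=
  {f | f ∈ Gambles Ω ∧ f ≠ 0 ∧ ∀ B ∈ 𝓑, B.indicator f ∈ Dc B ∪ {0}}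

/-!
Extensivity of `κ` gives the inclusions `⊇`; for `⊆` the hypothesis `E_κ ⊆ E_{κ₁}` lets us work
in `posi (D_𝓑 ∪ D|𝓑 ∪ L⁺)`. Its elements are sums `a + b + c` with `a` in the cone spanned by
`D_𝓑` (constant on blocks), `b` in the cone spanned by `D|𝓑` and `c ≥ 0`. On each block `B`,
`b` is nonnegative somewhere, since `1_B·b ∈ D|B ∪ {0}` and `D|B` avoids partial loss; so on
every block where `a + b + c` is constant, `a` is bounded by that constant. This makes
`D_𝓑 ∪ D|𝓑` avoid partial loss, and shows that `g = a + b + c ∈ L_𝓑` dominates `a`. If instead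
`g ∈ L|B`, then `a ≤ 0` off `B`, hence `a ≥ 0` on `B` as `D_𝓑` avoids partial loss, and `g`
dominates `1_B·b`. A nonzero gamble dominating an element of the cone spanned by `D` lies in
`posi (D ∪ L⁺)`, so coherence of `D_𝓑` relative to `L_𝓑` (of `D|B` relative to `L|B`) puts `g`
back into `D_𝓑` (into `D|B`).
-/

open scoped NNReal
open Submodule

section LinearSpaces
variable {Ω : Type*}

def gamblesSubmodule (Ω : Type*) : Submodule ℝ (Ω → ℝ) where
  carrier := Gambles Ω
  add_mem' := by
    rintro f g ⟨M, hM⟩ ⟨N, hN⟩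
    exact ⟨M + N, fun ω => (abs_add_le _ _).trans (add_le_add (hM ω) (hN ω))⟩
  zero_mem' := ⟨0, by simp⟩
  smul_mem' := by
    rintro c f ⟨M, hM⟩
    exact ⟨|c| * M, fun ω => by
      simpa [abs_mul] using mul_le_mul_of_nonneg_left (hM ω) (abs_nonneg c)⟩

def lmeasSubmodule (𝓑 : Set (Set Ω)) : Submodule ℝ (Ω → ℝ) where
  carrier := Lmeas 𝓑
  add_mem' := fun hf hg => ⟨(gamblesSubmodule Ω).add_mem hf.1 hg.1,
    fun B hB ω hω ω' hω' => by simp [hf.2 B hB ω hω ω' hω', hg.2 B hB ω hω ω' hω']⟩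
  zero_mem' := ⟨(gamblesSubmodule Ω).zero_mem, by simp⟩
  smul_mem' := fun c f hf => ⟨(gamblesSubmodule Ω).smul_mem c hf.1,
    fun B hB ω hω ω' hω' => by simp [hf.2 B hB ω hω ω' hω']⟩

theorem indicator_mem_Lcond {f : Ω → ℝ} (hf : f ∈ Gambles Ω) (B : Set Ω) :
    B.indicator f ∈ Lcond B := by
  refine ⟨?_, by rw [indicator_indicator, inter_self]⟩
  obtain ⟨M, hM⟩ := hf
  refine ⟨M, fun ω => ?_⟩
  by_cases hω : ω ∈ B
  · simpa [hω] using hM ω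
  · simpa [hω] using (abs_nonneg _).trans (hM ω)

theorem eq_zero_of_mem_Lcond {B : Set Ω} {f : Ω → ℝ} (hf : f ∈ Lcond B) {ω : Ω} (hω : ω ∉ B) :
    f ω = 0 := by
  rw [hf.2, indicator_of_notMem hω]

theorem span_nonneg_subset {G : Set (Ω → ℝ)} {p : Submodule ℝ (Ω → ℝ)} (hG : G ⊆ p) :
    (span ℝ≥0 G : Set (Ω → ℝ)) ⊆ p :=
  span_le (p := p.restrictScalars ℝ≥0) |>.2 hG

end LinearSpaces

theorem exists_add_add_of_mem_span_union {R M : Type*} [Semiring R] [AddCommMonoid M]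
    [Module R M] {G H K : Set M} {g : M} (hg : g ∈ span R (G ∪ H ∪ K)) :
    ∃ a ∈ span R G, ∃ b ∈ span R H, ∃ c ∈ span R K, g = a + b + c := by
  rw [span_union, span_union, mem_sup] at hg
  obtain ⟨ab, hab, c, hc, rfl⟩ := hg
  obtain ⟨a, ha, b, hb, rfl⟩ := mem_sup.1 hab
  exact ⟨a, ha, b, hb, c, hc, rfl⟩

section Posi
variable {Ω : Type*} {G C : Set (Ω → ℝ)} {f g : Ω → ℝ}

theorem subset_posi : G ⊆ posi G :=
  fun g hg => ⟨0, fun _ => g, fun _ => 1, fun _ => hg, fun _ => one_pos, by simp⟩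

theorem smul_mem_posi (hg : g ∈ posi G) {c : ℝ} (hc : 0 < c) : c • g ∈ posi G := by
  obtain ⟨n, f, l, hf, hl, rfl⟩ := hg
  refine ⟨n, f, fun i => c * l i, hf, fun i => mul_pos hc (hl i), ?_⟩
  simp [Finset.smul_sum, smul_smul]

theorem add_mem_posi (hf : f ∈ posi G) (hg : g ∈ posi G) : f + g ∈ posi G := by
  obtain ⟨m, u, l, hu, hl, rfl⟩ := hf
  obtain ⟨n, v, k, hv, hk, rfl⟩ := hg
  refine ⟨m + 1 + n, Fin.append (m := m + 1) (n := n + 1) u v,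
    Fin.append (m := m + 1) (n := n + 1) l k, fun i => ?_, fun i => ?_, ?_⟩
  · exact Fin.addCases (m := m + 1) (n := n + 1) (by simpa using hu) (by simpa using hv) i
  · exact Fin.addCases (m := m + 1) (n := n + 1) (by simpa using hl) (by simpa using hk) i
  · exact (Fin.sum_univ_add (a := m + 1) (b := n + 1)
      fun i => Fin.append l k i • Fin.append u v i).symm ▸ by simp

theorem posi_subset_of_closed (hGC : G ⊆ C) (hadd : ∀ f ∈ C, ∀ g ∈ C, f + g ∈ C)
    (hsmul : ∀ f ∈ C, ∀ c : ℝ, 0 < c → c • f ∈ C) : posi G ⊆ C := by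
  rintro _ ⟨n, f, l, hf, hl, rfl⟩
  induction n with
  | zero => simpa using hsmul _ (hGC (hf 0)) _ (hl 0)
  | succ n ih =>
    rw [Fin.sum_univ_succ]
    exact hadd _ (hsmul _ (hGC (hf 0)) _ (hl 0)) _ (ih _ _ (fun i => hf _) fun i => hl _)

theorem posi_mono {H : Set (Ω → ℝ)} (h : G ⊆ H) : posi G ⊆ posi H :=
  posi_subset_of_closed (h.trans subset_posi) (fun _ hf _ hg => add_mem_posi hf hg)
    fun _ hf _ hc => smul_mem_posi hf hc

theorem posi_subset_span : posi G ⊆ span ℝ≥0 G :=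
  posi_subset_of_closed subset_span (fun _ hf _ hg => add_mem hf hg)
    fun f hf c hc => by simpa [NNReal.smul_def, hc.le] using smul_mem _ c.toNNReal hf

theorem span_subset_insert_zero_posi : (span ℝ≥0 G : Set (Ω → ℝ)) ⊆ insert 0 (posi G) := by
  intro g hg
  induction hg using Submodule.span_induction with
  | mem f hf => exact Or.inr (subset_posi hf)
  | zero => exact Or.inl rfl
  | add f g _ _ hf hg =>
    rcases hf with rfl | hf
    · simpa using hg
    rcases hg with rfl | hg
    · simpa using Or.inr hf
    exact Or.inr (add_mem_posi hf hg)
  | smul c f _ hf =>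
    rcases hf with rfl | hf
    · simp
    rcases c.coe_nonneg.eq_or_lt with hc | hc
    · simp [NNReal.coe_eq_zero.1 hc.symm]
    · exact Or.inr (by simpa [NNReal.smul_def] using smul_mem_posi hf hc)

theorem add_mem_posi_of_mem_span (hf : f ∈ posi G) (hg : g ∈ span ℝ≥0 G) : f + g ∈ posi G := by
  rcases span_subset_insert_zero_posi hg with rfl | hg
  · simpa using hf
  · exact add_mem_posi hf hg

theorem exists_smul_add_of_mem_posi (hg : g ∈ posi G) :
    ∃ f ∈ G, ∃ c : ℝ, 0 < c ∧ ∃ r ∈ span ℝ≥0 G, g = c • f + r := by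
  obtain ⟨n, f, l, hf, hl, rfl⟩ := hg
  refine ⟨f 0, hf 0, l 0, hl 0, ∑ i : Fin n, l i.succ • f i.succ, ?_, Fin.sum_univ_succ _⟩
  exact sum_mem fun i _ => posi_subset_span (smul_mem_posi (subset_posi (hf _)) (hl _))

theorem posi_subset_gambles (hG : G ⊆ Gambles Ω) : posi G ⊆ Gambles Ω :=
  posi_subset_span.trans (span_nonneg_subset (p := gamblesSubmodule Ω) hG)

end Posi

theorem mem_span_Lpos_of_nonneg {Ω : Type*} {c : Ω → ℝ} (hc : c ∈ Gambles Ω) (hc0 : 0 ≤ c) :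
    c ∈ span ℝ≥0 (Lpos Ω) := by
  by_cases h : c = 0
  · exact h ▸ zero_mem _
  · exact subset_span ⟨hc, hc0, h⟩

theorem posi_Lpos_subset {Ω : Type*} : posi (Lpos Ω) ⊆ Lpos Ω :=
  posi_subset_of_closed subset_rfl
    (fun _ hf _ hg => ⟨(gamblesSubmodule Ω).add_mem hf.1 hg.1, add_nonneg hf.2.1 hg.2.1,
      fun h => hf.2.2 (le_antisymm (h ▸ le_add_of_nonneg_right hg.2.1) hf.2.1)⟩)
    fun _ hf c hc => ⟨(gamblesSubmodule Ω).smul_mem c hf.1, smul_nonneg hc.le hf.2.1,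
      smul_ne_zero hc.ne' hf.2.2⟩

theorem nonneg_of_mem_span_Lpos {Ω : Type*} {c : Ω → ℝ} (hc : c ∈ span ℝ≥0 (Lpos Ω)) :
    0 ≤ c := by
  rcases span_subset_insert_zero_posi hc with rfl | hc
  · exact le_rfl
  · exact (posi_Lpos_subset hc).2.1

section Coherence
variable {Ω : Type*} {Q D : Set (Ω → ℝ)} {f g : Ω → ℝ}

theorem AvoidsPartialLoss.not_nonpos (h : AvoidsPartialLoss posi D) (hD : D ⊆ Gambles Ω)
    (hg : g ∈ posi (D ∪ Lpos Ω)) : ¬ g ≤ 0 := fun hle =>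
  eq_empty_iff_forall_notMem.1 h g
    ⟨⟨posi_subset_gambles (union_subset hD fun _ hf => hf.1) hg, hle⟩, hg⟩

theorem AvoidsPartialLoss.ne_zero (h : AvoidsPartialLoss posi D) (hD : D ⊆ Gambles Ω)
    (hg : g ∈ posi (D ∪ Lpos Ω)) : g ≠ 0 :=
  fun h0 => h.not_nonpos hD hg h0.le

theorem AvoidsPartialLoss.eq_zero_of_mem_span (h : AvoidsPartialLoss posi D)
    (hD : D ⊆ Gambles Ω) (hg : g ∈ span ℝ≥0 D) (hle : g ≤ 0) : g = 0 :=
  (span_subset_insert_zero_posi hg).resolve_right fun hg =>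
    h.not_nonpos hD (posi_mono subset_union_left hg) hle

theorem CoherentRel.not_nonpos (h : CoherentRel posi Q D) (hD : D ⊆ Gambles Ω) (hf : f ∈ D) :
    ¬ f ≤ 0 :=
  h.1.not_nonpos hD (subset_posi (Or.inl hf))

theorem CoherentRel.add_mem (h : CoherentRel posi Q D) (hf : f ∈ D) (hg : g ∈ D)
    (hQ : f + g ∈ Q) : f + g ∈ D :=
  h.2 ⟨hQ, add_mem_posi (subset_posi (Or.inl hf)) (subset_posi (Or.inl hg))⟩

theorem CoherentRel.smul_mem (h : CoherentRel posi Q D) (hf : f ∈ D) {c : ℝ} (hc : 0 < c)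
    (hQ : c • f ∈ Q) : c • f ∈ D :=
  h.2 ⟨hQ, smul_mem_posi (subset_posi (Or.inl hf)) hc⟩

theorem CoherentRel.mem_of_le (h : CoherentRel posi Q D) (hD : D ⊆ Gambles Ω) (hgQ : g ∈ Q)
    (hg : g ∈ Gambles Ω) (hg0 : g ≠ 0) (hf : f ∈ span ℝ≥0 D) (hfg : f ≤ g) : g ∈ D := by
  have hgf : g - f ∈ span ℝ≥0 (Lpos Ω) := mem_span_Lpos_of_nonneg
    ((gamblesSubmodule Ω).sub_mem hg (span_nonneg_subset (p := gamblesSubmodule Ω) hD hf))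
    (sub_nonneg.2 hfg)
  have hg' : g ∈ span ℝ≥0 (D ∪ Lpos Ω) := by
    simpa using
      Submodule.add_mem _ (span_mono subset_union_left hf) (span_mono subset_union_right hgf)
  exact h.2 ⟨hgQ, (span_subset_insert_zero_posi hg').resolve_left hg0⟩

end Coherence

def IsCoherentFamily {Ω : Type*} (𝓑 : Set (Set Ω)) (Dc : Set Ω → Set (Ω → ℝ)) : Prop :=
  ∀ B ∈ 𝓑, Dc B ⊆ Lcond B ∧ CoherentRel posi (Lcond B) (Dc B)

section CondAgg
variable {Ω : Type*} {𝓑 : Set (Set Ω)} {Dc : Set Ω → Set (Ω → ℝ)} {B : Set Ω} {f g b : Ω → ℝ}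

theorem IsCoherentFamily.not_nonpos (hDc : IsCoherentFamily 𝓑 Dc) (hB : B ∈ 𝓑) (hf : f ∈ Dc B) :
    ¬ f ≤ 0 :=
  (hDc B hB).2.not_nonpos (fun _ h => ((hDc B hB).1 h).1) hf

theorem IsCoherentFamily.exists_pos (hDc : IsCoherentFamily 𝓑 Dc) (hB : B ∈ 𝓑)
    (hf : B.indicator f ∈ Dc B) : ∃ ω ∈ B, 0 < f ω := by
  by_contra! h
  exact hDc.not_nonpos hB hf (indicator_nonpos h)

theorem IsCoherentFamily.indicator_add_mem (hDc : IsCoherentFamily 𝓑 Dc) (hB : B ∈ 𝓑)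
    (hf : B.indicator f ∈ Dc B) (hg : B.indicator g ∈ Dc B ∪ {0}) (hfg : f + g ∈ Gambles Ω) :
    B.indicator (f + g) ∈ Dc B := by
  rw [indicator_add']
  rcases hg with hg | hg
  · exact (hDc B hB).2.add_mem hf hg (indicator_add' B f g ▸ indicator_mem_Lcond hfg B)
  · rwa [mem_singleton_iff.1 hg, add_zero]

theorem posi_condAgg_subset (hpart : Setoid.IsPartition 𝓑) (hDc : IsCoherentFamily 𝓑 Dc) :
    posi (condAgg 𝓑 Dc) ⊆ condAgg 𝓑 Dc := by
  refine posi_subset_of_closed subset_rfl (fun f hf g hg => ?_) fun f hf c hc => ?_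
  · have hfg := (gamblesSubmodule Ω).add_mem hf.1 hg.1
    refine ⟨hfg, fun h0 => ?_, fun B hB => ?_⟩
    · obtain ⟨ω, hω⟩ := Function.ne_iff.1 hf.2.1
      obtain ⟨B, hB, hωB⟩ := (hpart.2 ω).exists
      have hfB : B.indicator f ∈ Dc B := (hf.2.2 B hB).resolve_right fun h =>
        hω (by simpa [hωB] using congrFun (mem_singleton_iff.1 h) ω)
      exact hDc.not_nonpos hB (h0 ▸ hDc.indicator_add_mem hB hfB (hg.2.2 B hB) hfg) (by simp)
    · rcases hf.2.2 B hB with h | h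
      · exact Or.inl (hDc.indicator_add_mem hB h (hg.2.2 B hB) hfg)
      · simpa [indicator_add', mem_singleton_iff.1 h] using hg.2.2 B hB
  · have hcf := (gamblesSubmodule Ω).smul_mem c hf.1
    refine ⟨hcf, smul_ne_zero hc.ne' hf.2.1, fun B hB => ?_⟩
    have hind : B.indicator (c • f) = c • B.indicator f := indicator_const_smul B c f
    rw [hind]
    rcases hf.2.2 B hB with h | h
    · exact Or.inl ((hDc B hB).2.smul_mem h hc (hind ▸ indicator_mem_Lcond hcf B))
    · simp [mem_singleton_iff.1 h]

theorem mem_span_condAgg (hpart : Setoid.IsPartition 𝓑) (hDc : IsCoherentFamily 𝓑 Dc)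
    (hb : b ∈ span ℝ≥0 (condAgg 𝓑 Dc)) : b = 0 ∨ b ∈ condAgg 𝓑 Dc :=
  (span_subset_insert_zero_posi hb).imp_right fun hb => posi_condAgg_subset hpart hDc hb

theorem exists_nonneg_of_mem_span_condAgg (hpart : Setoid.IsPartition 𝓑)
    (hDc : IsCoherentFamily 𝓑 Dc) (hb : b ∈ span ℝ≥0 (condAgg 𝓑 Dc)) (hB : B ∈ 𝓑) :
    ∃ ω ∈ B, 0 ≤ b ω := by
  obtain ⟨ω, hω⟩ := Setoid.nonempty_of_mem_partition hpart hB
  rcases mem_span_condAgg hpart hDc hb with rfl | hb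
  · exact ⟨ω, hω, le_rfl⟩
  rcases hb.2.2 B hB with h | h
  · obtain ⟨ω', hω', hpos⟩ := hDc.exists_pos hB h
    exact ⟨ω', hω', hpos.le⟩
  · exact ⟨ω, hω, by simpa [hω] using (congrFun (mem_singleton_iff.1 h) ω).ge⟩

theorem eq_zero_of_mem_span_condAgg (hpart : Setoid.IsPartition 𝓑)
    (hDc : IsCoherentFamily 𝓑 Dc) (hb : b ∈ span ℝ≥0 (condAgg 𝓑 Dc)) (hle : b ≤ 0) : b = 0 := by
  refine (mem_span_condAgg hpart hDc hb).resolve_right fun hb => hb.2.1 (funext fun ω => ?_)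
  obtain ⟨B, hB, hωB⟩ := (hpart.2 ω).exists
  rcases hb.2.2 B hB with h | h
  · obtain ⟨ω', -, hpos⟩ := hDc.exists_pos hB h
    exact absurd (hle ω') hpos.not_ge
  · simpa [hωB] using congrFun (mem_singleton_iff.1 h) ω

theorem indicator_mem_span_of_mem_span_condAgg (hpart : Setoid.IsPartition 𝓑)
    (hDc : IsCoherentFamily 𝓑 Dc) (hb : b ∈ span ℝ≥0 (condAgg 𝓑 Dc)) (hB : B ∈ 𝓑) :
    B.indicator b ∈ span ℝ≥0 (Dc B) := by
  rcases mem_span_condAgg hpart hDc hb with rfl | hb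
  · simp
  rcases hb.2.2 B hB with h | h
  · exact subset_span h
  · exact mem_singleton_iff.1 h ▸ zero_mem _

theorem subset_condAgg (hpart : Setoid.IsPartition 𝓑) (hDc : IsCoherentFamily 𝓑 Dc)
    (hB : B ∈ 𝓑) : Dc B ⊆ condAgg 𝓑 Dc := by
  intro f hf
  have hfc := (hDc B hB).1 hf
  refine ⟨hfc.1, fun h => hDc.not_nonpos hB hf h.le, fun B' hB' => ?_⟩
  by_cases h : B' = B
  · subst h
    exact Or.inl (by rwa [← hfc.2])
  · refine Or.inr (mem_singleton_iff.2 (funext fun ω => indicator_apply_eq_zero.2 ?_))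
    exact fun hω => eq_zero_of_mem_Lcond hfc (disjoint_left.1 (hpart.pairwiseDisjoint hB' hB h) hω)

end CondAgg

section Marginal
variable {Ω : Type*} {𝓑 : Set (Set Ω)} {Dc : Set Ω → Set (Ω → ℝ)} {DB : Set (Ω → ℝ)}
  {a b c g : Ω → ℝ}

theorem le_of_add_le_on_block (hpart : Setoid.IsPartition 𝓑) (hDc : IsCoherentFamily 𝓑 Dc)
    (ha : a ∈ Lmeas 𝓑) (hb : b ∈ span ℝ≥0 (condAgg 𝓑 Dc)) (hc : 0 ≤ c) {B : Set Ω}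
    (hB : B ∈ 𝓑) {t : ℝ} (ht : ∀ ω ∈ B, a ω + b ω + c ω ≤ t) {ω : Ω} (hω : ω ∈ B) :
    a ω ≤ t := by
  obtain ⟨ω', hω', hbω'⟩ := exists_nonneg_of_mem_span_condAgg hpart hDc hb hB
  rw [ha.2 B hB ω hω ω' hω']
  linarith [ht ω' hω', show 0 ≤ c ω' from hc ω']

theorem eq_zero_of_add_le_zero (hpart : Setoid.IsPartition 𝓑) (hDBsub : DB ⊆ Lmeas 𝓑)
    (hDB : AvoidsPartialLoss posi DB) (hDc : IsCoherentFamily 𝓑 Dc)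
    (ha : a ∈ span ℝ≥0 DB) (hb : b ∈ span ℝ≥0 (condAgg 𝓑 Dc)) (hc : c ∈ span ℝ≥0 (Lpos Ω))
    (hle : a + b + c ≤ 0) : a = 0 ∧ b = 0 ∧ c = 0 := by
  have hc0 := nonneg_of_mem_span_Lpos hc
  have ha0 : a = 0 := hDB.eq_zero_of_mem_span (fun _ hf => (hDBsub hf).1) ha fun ω => by
    obtain ⟨B, hB, hωB⟩ := (hpart.2 ω).exists
    exact le_of_add_le_on_block hpart hDc (span_nonneg_subset (p := lmeasSubmodule 𝓑) hDBsub ha)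
      hb hc0 hB (fun ω' _ => hle ω') hωB
  subst ha0
  have hb0 : b = 0 := eq_zero_of_mem_span_condAgg hpart hDc hb fun ω => by
    have h := hle ω
    have h' := hc0 ω
    simp only [Pi.add_apply, Pi.zero_apply, zero_add] at h h' ⊢
    linarith
  subst hb0
  exact ⟨rfl, rfl, le_antisymm (by simpa using hle) hc0⟩

theorem avoidsPartialLoss_union_condAgg (hpart : Setoid.IsPartition 𝓑) (hDBsub : DB ⊆ Lmeas 𝓑)
    (hDB : AvoidsPartialLoss posi DB) (hDc : IsCoherentFamily 𝓑 Dc) :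
    AvoidsPartialLoss posi (DB ∪ condAgg 𝓑 Dc) := by
  refine eq_empty_iff_forall_notMem.2 fun g ⟨⟨_, hle⟩, hg⟩ => ?_
  obtain ⟨f, hf, l, hl, r, hr, rfl⟩ := exists_smul_add_of_mem_posi hg
  obtain ⟨a, ha, b, hb, c, hc, rfl⟩ := exists_add_add_of_mem_span_union hr
  have hlf {G : Set (Ω → ℝ)} (hfG : f ∈ G) : l • f ∈ posi G := smul_mem_posi (subset_posi hfG) hl
  rcases hf with (hf | hf) | hf
  · have ha' := add_mem_posi_of_mem_span (hlf hf) ha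
    have h0 := (eq_zero_of_add_le_zero hpart hDBsub hDB hDc (posi_subset_span ha') hb hc
      (by convert hle using 1; abel)).1
    exact hDB.not_nonpos (fun _ hf => (hDBsub hf).1) (posi_mono subset_union_left ha') h0.le
  · have hb' := posi_condAgg_subset hpart hDc (add_mem_posi_of_mem_span (hlf hf) hb)
    exact hb'.2.1 (eq_zero_of_add_le_zero hpart hDBsub hDB hDc ha (subset_span hb') hc
      (by convert hle using 1; abel)).2.1
  · have hc' := posi_Lpos_subset (add_mem_posi_of_mem_span (hlf hf) hc)
    exact hc'.2.2 (eq_zero_of_add_le_zero hpart hDBsub hDB hDc ha hb (subset_span hc')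
      (by convert hle using 1; abel)).2.2

theorem mem_of_mem_posi_of_mem_Lmeas (hpart : Setoid.IsPartition 𝓑) (hDBsub : DB ⊆ Lmeas 𝓑)
    (hDB : CoherentRel posi (Lmeas 𝓑) DB) (hDc : IsCoherentFamily 𝓑 Dc)
    (hg : g ∈ posi (DB ∪ condAgg 𝓑 Dc ∪ Lpos Ω)) (hgm : g ∈ Lmeas 𝓑) : g ∈ DB := by
  have hDBG : DB ⊆ Gambles Ω := fun _ hf => (hDBsub hf).1
  have hg0 : g ≠ 0 := (avoidsPartialLoss_union_condAgg hpart hDBsub hDB.1 hDc).ne_zero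
    (union_subset hDBG fun _ hf => hf.1) hg
  obtain ⟨a, ha, b, hb, c, hc, rfl⟩ := exists_add_add_of_mem_span_union (posi_subset_span hg)
  refine hDB.mem_of_le hDBG hgm hgm.1 hg0 ha fun ω => ?_
  obtain ⟨B, hB, hωB⟩ := (hpart.2 ω).exists
  exact le_of_add_le_on_block hpart hDc (span_nonneg_subset (p := lmeasSubmodule 𝓑) hDBsub ha) hb
    (nonneg_of_mem_span_Lpos hc) hB (fun ω' hω' => (hgm.2 B hB ω' hω' ω hωB).le) hωB

theorem mem_of_mem_posi_of_mem_Lcond (hpart : Setoid.IsPartition 𝓑) (hDBsub : DB ⊆ Lmeas 𝓑)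
    (hDB : AvoidsPartialLoss posi DB) (hDc : IsCoherentFamily 𝓑 Dc) {B₀ : Set Ω} (hB₀ : B₀ ∈ 𝓑)
    (hg : g ∈ posi (DB ∪ condAgg 𝓑 Dc ∪ Lpos Ω)) (hgc : g ∈ Lcond B₀) : g ∈ Dc B₀ := by
  have hDBG : DB ⊆ Gambles Ω := fun _ hf => (hDBsub hf).1
  have hg0 : g ≠ 0 := (avoidsPartialLoss_union_condAgg hpart hDBsub hDB hDc).ne_zero
    (union_subset hDBG fun _ hf => hf.1) hg
  obtain ⟨a, ha, b, hb, c, hc, rfl⟩ := exists_add_add_of_mem_span_union (posi_subset_span hg)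
  have hc0 := nonneg_of_mem_span_Lpos hc
  have haB := span_nonneg_subset (p := lmeasSubmodule 𝓑) hDBsub ha
  have ha_off : ∀ ω ∉ B₀, a ω ≤ 0 := fun ω hω => by
    obtain ⟨B, hB, hωB⟩ := (hpart.2 ω).exists
    have hBB₀ : Disjoint B B₀ := hpart.pairwiseDisjoint hB hB₀ fun h => hω (h ▸ hωB)
    exact le_of_add_le_on_block hpart hDc haB hb hc0 hB
      (fun ω' hω' => (eq_zero_of_mem_Lcond hgc (disjoint_left.1 hBB₀ hω')).le) hωB
  have ha_on : ∀ ω ∈ B₀, 0 ≤ a ω := fun ω hω => by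
    by_contra! hneg
    have ha0 : a = 0 := hDB.eq_zero_of_mem_span hDBG ha fun ω' => by
      by_cases hω' : ω' ∈ B₀
      · exact (haB.2 B₀ hB₀ ω' hω' ω hω).trans_le hneg.le
      · exact ha_off ω' hω'
    simp [ha0] at hneg
  refine (hDc B₀ hB₀).2.mem_of_le (fun _ hf => ((hDc B₀ hB₀).1 hf).1) hgc hgc.1 hg0
    (indicator_mem_span_of_mem_span_condAgg hpart hDc hb hB₀) fun ω => ?_
  by_cases hω : ω ∈ B₀
  · simp only [indicator_of_mem hω, Pi.add_apply]
    linarith [ha_on ω hω, show 0 ≤ c ω from hc0 ω]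
  · rw [indicator_of_notMem hω, eq_zero_of_mem_Lcond hgc hω]

end Marginal

theorem stmt11_general {Ω : Type*} (𝓑 : Set (Set Ω)) (hpart : Setoid.IsPartition 𝓑)
    (κ : Set (Ω → ℝ) → Set (Ω → ℝ)) (hκ : InKd κ)
    (hdom : ∀ G ⊆ Gambles Ω, natExt κ G ⊆ natExt posi G)
    (DB : Set (Ω → ℝ)) (hDBsub : DB ⊆ Lmeas 𝓑)
    (hDBcoh : CoherentRel posi (Lmeas 𝓑) DB)
    (Dc : Set Ω → Set (Ω → ℝ))
    (hDc : ∀ B ∈ 𝓑, Dc B ⊆ Lcond B ∧ CoherentRel posi (Lcond B) (Dc B)) :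
    natExt κ (DB ∪ condAgg 𝓑 Dc) ∩ Lmeas 𝓑 = DB ∧
      ∀ B ∈ 𝓑, natExt κ (DB ∪ condAgg 𝓑 Dc) ∩ Lcond B = Dc B := by
  have hAG : DB ∪ condAgg 𝓑 Dc ⊆ Gambles Ω :=
    union_subset (fun _ hf => (hDBsub hf).1) fun _ hf => hf.1
  have hlower : DB ∪ condAgg 𝓑 Dc ∪ Lpos Ω ⊆ natExt κ (DB ∪ condAgg 𝓑 Dc) :=
    hκ.1.extensive _ (union_subset hAG fun _ hf => hf.1)
  have hupper : natExt κ (DB ∪ condAgg 𝓑 Dc) ⊆ posi (DB ∪ condAgg 𝓑 Dc ∪ Lpos Ω) := hdom _ hAG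
  refine ⟨subset_antisymm ?_ ?_, fun B hB => subset_antisymm ?_ ?_⟩
  · exact fun g hg => mem_of_mem_posi_of_mem_Lmeas hpart hDBsub hDBcoh hDc (hupper hg.1) hg.2
  · exact fun g hg => ⟨hlower (Or.inl (Or.inl hg)), hDBsub hg⟩
  · exact fun g hg => mem_of_mem_posi_of_mem_Lcond hpart hDBsub hDBcoh.1 hDc hB (hupper hg.1) hg.2
  · exact fun g hg => ⟨hlower (Or.inl (Or.inr (subset_condAgg hpart hDc hB hg))), (hDc B hB).1 hg⟩

/-- under the stated conditions, the marginal extension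
`D' = E_κ(D_𝓑 ∪ D|𝓑)` has marginal `D_𝓑` and conditionals `D|B` for every `B ∈ 𝓑`. -/
theorem stmt11 {Ω : Type*} [Nonempty Ω] (𝓑 : Set (Set Ω)) (hpart : Setoid.IsPartition 𝓑)
    (κ : Set (Ω → ℝ) → Set (Ω → ℝ)) (hκ : InKd κ)
    (hdom : ∀ G ⊆ Gambles Ω, natExt κ G ⊆ natExt posi G)
    (DB : Set (Ω → ℝ)) (hDBsub : DB ⊆ Lmeas 𝓑)
    (hDBcoh : CoherentRel posi (Lmeas 𝓑) DB)
    (Dc : Set Ω → Set (Ω → ℝ))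
    (hDc : ∀ B ∈ 𝓑, Dc B ⊆ Lcond B ∧ CoherentRel posi (Lcond B) (Dc B)) :
    natExt κ (DB ∪ condAgg 𝓑 Dc) ∩ Lmeas 𝓑 = DB ∧
      ∀ B ∈ 𝓑, natExt κ (DB ∪ condAgg 𝓑 Dc) ∩ Lcond B = Dc B :=
  stmt11_general 𝓑 hpart κ hκ hdom DB hDBsub hDBcoh Dc hDc
end

section
/- Let P : L → ℝ be a monotone functional (f ≤ g implies P(f) ≤ P(g)) and set D_P := L⁺ ∪ {f ∈ L : P(f) > 0}. Then the following are equivalent: (a) D_P is κ-coherent for some closure operator κ ∈ K_d; (b) D_P is closed under dominance and L⁻₀ ∩ κ₄(D_P ∪ L⁺) = ∅; (c) L⁻₀ ∩ κ₄(D_P ∪ L⁺) = ∅, where κ₄(G) := {g ∈ L : ∃ f ∈ G, g ≥ f}. Moreover, if P(0) = 0 then D_P is κ₄-coherent. -/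
/-! Monotonicity of `P` makes `D_P` closed upwards, so `κ₄(D_P ∪ L⁺) = D_P`. Each of the three
conditions therefore amounts to `D_P ∩ L⁻₀ = ∅`, and `κ₄` itself witnesses (a). If `P 0 = 0`,
a nonpositive gamble `f` has `P f ≤ P 0 = 0`, so it lies outside `D_P`. -/

open Set

/-- The closure operator `κ₄`, associated with closure under dominance. -/
def k4 {Ω : Type*} (G : Set (Ω → ℝ)) : Set (Ω → ℝ) :=
  {g | g ∈ Gambles Ω ∧ ∃ f ∈ G, f ≤ g}

/-- `D_P = L⁺ ∪ {f ∈ L : P(f) > 0}`. -/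
def DP {Ω : Type*} (P : (Ω → ℝ) → ℝ) : Set (Ω → ℝ) :=
  Lpos Ω ∪ {f ∈ Gambles Ω | 0 < P f}

theorem k4_subset_gambles {Ω : Type*} (G : Set (Ω → ℝ)) : k4 G ⊆ Gambles Ω :=
  fun _ hg => hg.1

theorem subset_k4 {Ω : Type*} {G : Set (Ω → ℝ)} (hG : G ⊆ Gambles Ω) : G ⊆ k4 G :=
  fun f hf => ⟨hG hf, f, hf, le_rfl⟩

theorem k4_mono {Ω : Type*} {G G' : Set (Ω → ℝ)} (h : G ⊆ G') : k4 G ⊆ k4 G' :=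
  fun _ ⟨hg, f, hf, hfg⟩ => ⟨hg, f, h hf, hfg⟩

theorem k4_k4 {Ω : Type*} (G : Set (Ω → ℝ)) : k4 (k4 G) = k4 G :=
  Subset.antisymm (fun _ ⟨hg, _, ⟨_, f, hf, hfh⟩, hhg⟩ => ⟨hg, f, hf, hfh.trans hhg⟩)
    (subset_k4 (k4_subset_gambles G))

theorem isClosureOp_k4 (Ω : Type*) : IsClosureOp Ω k4 where
  maps_to D _ := k4_subset_gambles D
  extensive _ hD := subset_k4 hD
  mono _ _ _ _ h := k4_mono h
  idem D _ := k4_k4 D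

theorem k4_eq_of_k4_union_Lpos_eq {Ω : Type*} {D : Set (Ω → ℝ)}
    (h : k4 (D ∪ Lpos Ω) = D) : k4 D = D :=
  Subset.antisymm ((k4_mono subset_union_left).trans h.subset)
    (subset_k4 (h ▸ k4_subset_gambles _))

theorem inKd_k4 (Ω : Type*) : InKd (Ω := Ω) k4 :=
  ⟨isClosureOp_k4 Ω, fun _ ⟨_, hD, _⟩ => (k4_eq_of_k4_union_Lpos_eq hD).symm⟩

theorem k4_Lpos_subset (Ω : Type*) : k4 (Lpos Ω) ⊆ Lpos Ω := by
  rintro g ⟨hg, f, ⟨-, hf0, hf⟩, hfg⟩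
  refine ⟨hg, hf0.trans hfg, fun hg0 => hf (le_antisymm ?_ hf0)⟩
  exact hg0 ▸ hfg

section DP

variable {Ω : Type*} {P : (Ω → ℝ) → ℝ}

theorem DP_subset_gambles : DP P ⊆ Gambles Ω := by
  rintro f (hf | hf) <;> exact hf.1

theorem Lpos_subset_DP : Lpos Ω ⊆ DP P := subset_union_left

theorem k4_DP (hP : MonotoneOn P (Gambles Ω)) : k4 (DP P) = DP P := by
  refine Subset.antisymm ?_ (subset_k4 DP_subset_gambles)
  rintro g ⟨hg, f, hf | ⟨hfG, hPf⟩, hfg⟩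
  · exact Lpos_subset_DP (k4_Lpos_subset Ω ⟨hg, f, hf, hfg⟩)
  · exact Or.inr ⟨hg, hPf.trans_le (hP hfG hg hfg)⟩

theorem k4_DP_union_Lpos (hP : MonotoneOn P (Gambles Ω)) :
    k4 (DP P ∪ Lpos Ω) = DP P := by
  rw [union_eq_self_of_subset_right Lpos_subset_DP, k4_DP hP]

theorem DP_inter_Lneg0_eq_empty (hP : MonotoneOn P (Gambles Ω)) (hP0 : P 0 = 0) :
    DP P ∩ Lneg0 Ω = ∅ := by
  refine eq_empty_of_forall_notMem ?_
  rintro f ⟨⟨-, hf0, hf⟩ | ⟨hfG, hPf⟩, -, hf_nonpos⟩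
  · exact hf (le_antisymm hf_nonpos hf0)
  · have hzero : (0 : Ω → ℝ) ∈ Gambles Ω := ⟨0, fun _ => by simp⟩
    linarith [hP hfG hzero hf_nonpos]

theorem coherent_k4_DP_iff (hP : MonotoneOn P (Gambles Ω)) :
    Coherent k4 (DP P) ↔ Lneg0 Ω ∩ k4 (DP P ∪ Lpos Ω) = ∅ := by
  rw [k4_DP_union_Lpos hP, inter_comm]
  exact ⟨fun h => h.2.2, fun h => ⟨DP_subset_gambles, k4_DP_union_Lpos hP, h⟩⟩

end DP

theorem stmt15_general {Ω : Type*} (P : (Ω → ℝ) → ℝ)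
    (hmono : ∀ f g : Ω → ℝ, f ∈ Gambles Ω → g ∈ Gambles Ω → f ≤ g → P f ≤ P g) :
    ((∃ κ : Set (Ω → ℝ) → Set (Ω → ℝ), InKd κ ∧ Coherent κ (DP P)) ↔
        Lneg0 Ω ∩ k4 (DP P ∪ Lpos Ω) = ∅) ∧
      ((ClosedUnderDominance (DP P) ∧ Lneg0 Ω ∩ k4 (DP P ∪ Lpos Ω) = ∅) ↔
        Lneg0 Ω ∩ k4 (DP P ∪ Lpos Ω) = ∅) ∧
      (P 0 = 0 → Coherent k4 (DP P)) := by
  have hP : MonotoneOn P (Gambles Ω) := fun f hf g hg hfg => hmono f g hf hg hfg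
  have hclosed : ClosedUnderDominance (DP P) := (k4_DP hP).symm
  refine ⟨⟨?_, fun h => ⟨k4, inKd_k4 Ω, (coherent_k4_DP_iff hP).2 h⟩⟩,
    ⟨And.right, fun h => ⟨hclosed, h⟩⟩,
    fun hP0 => (coherent_k4_DP_iff hP).2 ?_⟩
  · rintro ⟨κ, -, -, -, hdisj⟩
    rwa [k4_DP_union_Lpos hP, inter_comm]
  · rw [k4_DP_union_Lpos hP, inter_comm]
    exact DP_inter_Lneg0_eq_empty hP hP0

/-- for a monotone functional `P`, the following are equivalent:
(a) `D_P` is κ-coherent for some `κ ∈ K_d`; (b) `D_P` is closed under dominance and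
`L⁻₀ ∩ κ₄(D_P ∪ L⁺) = ∅`; (c) `L⁻₀ ∩ κ₄(D_P ∪ L⁺) = ∅`. Moreover, if `P(0) = 0`
then `D_P` is κ₄-coherent. -/
theorem stmt15 {Ω : Type*} [Nonempty Ω] (P : (Ω → ℝ) → ℝ)
    (hmono : ∀ f g : Ω → ℝ, f ∈ Gambles Ω → g ∈ Gambles Ω → f ≤ g → P f ≤ P g) :
    ((∃ κ : Set (Ω → ℝ) → Set (Ω → ℝ), InKd κ ∧ Coherent κ (DP P)) ↔
        Lneg0 Ω ∩ k4 (DP P ∪ Lpos Ω) = ∅) ∧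
      ((ClosedUnderDominance (DP P) ∧ Lneg0 Ω ∩ k4 (DP P ∪ Lpos Ω) = ∅) ↔
        Lneg0 Ω ∩ k4 (DP P ∪ Lpos Ω) = ∅) ∧
      (P 0 = 0 → Coherent k4 (DP P)) :=
  stmt15_general P hmono
end

section
/- Let κ be a closure operator such that κ(G) is closed under dominance for every G ⊆ L, and let D ⊆ L contain L⁺. If there exists a gamble f such that f − μ ∈ D for every real number μ, then E_κ(D) = L. Consequently, if E_κ(D) ≠ L then for every gamble f the set {μ ∈ ℝ : f − μ ∈ D} is nonempty and bounded above, so the lower prevision P_D(f) := sup{μ ∈ ℝ : f − μ ∈ D} is a real number. -/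
open Set

/-! If `f - μ ∈ D` for arbitrarily large `μ`, then `E_κ(D) ⊇ D` contains gambles lying below any
given constant; every gamble `g` dominates one of them, so `g ∈ E_κ(D)` by dominance closure.
Hence when `E_κ(D) ≠ L` the set `{μ : f - μ ∈ D}` is bounded above, and it is nonempty because
`f - μ ∈ L⁺ ⊆ D` as soon as `μ < inf f`. -/

lemma sub_const_mem_gambles {Ω : Type*} {f : Ω → ℝ} (hf : f ∈ Gambles Ω) (μ : ℝ) :
    (f - fun _ => μ) ∈ Gambles Ω := by
  obtain ⟨M, hM⟩ := hf
  exact ⟨M + |μ|, fun ω => (abs_sub _ _).trans (add_le_add_left (hM ω) _)⟩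

lemma exists_sub_const_mem_Lpos {Ω : Type*} [Nonempty Ω] {f : Ω → ℝ} (hf : f ∈ Gambles Ω) :
    ∃ μ : ℝ, (f - fun _ => μ) ∈ Lpos Ω := by
  obtain ⟨M, hM⟩ := hf
  have hpos : ∀ ω, 0 < (f - fun _ : Ω => -(M + 1)) ω := fun ω => by
    simp only [Pi.sub_apply]
    linarith [neg_abs_le (f ω), hM ω]
  refine ⟨-(M + 1), sub_const_mem_gambles ⟨M, hM⟩ _, fun ω => (hpos ω).le, fun h => ?_⟩
  obtain ⟨ω⟩ := ‹Nonempty Ω›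
  exact (hpos ω).ne' (congrFun h ω)

lemma ClosedUnderDominance.eq_gambles {Ω : Type*} {G : Set (Ω → ℝ)}
    (hG : ClosedUnderDominance G) (h : ∀ c : ℝ, ∃ g ∈ G, g ≤ fun _ => c) :
    G = Gambles Ω := by
  refine (hG.trans_subset fun g hg => hg.1).antisymm fun g hg => ?_
  obtain ⟨N, hN⟩ := hg
  obtain ⟨f, hfG, hf⟩ := h (-N)
  rw [hG]
  exact ⟨⟨N, hN⟩, f, hfG, fun ω => (hf ω).trans (neg_le_of_abs_le (hN ω))⟩

lemma natExt_eq_gambles_of_not_bddAbove {Ω : Type*} {κ : Set (Ω → ℝ) → Set (Ω → ℝ)}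
    (hκ : IsClosureOp Ω κ) (hdom : ∀ G ⊆ Gambles Ω, ClosedUnderDominance (κ G))
    {D : Set (Ω → ℝ)} (hD : D ⊆ Gambles Ω) {f : Ω → ℝ} (hf : f ∈ Gambles Ω)
    (hunb : ¬ BddAbove {μ : ℝ | (f - fun _ => μ) ∈ D}) :
    natExt κ D = Gambles Ω := by
  have hDL : D ∪ Lpos Ω ⊆ Gambles Ω := union_subset hD fun _ hg => hg.1
  obtain ⟨M, hM⟩ := hf
  refine (hdom _ hDL).eq_gambles fun c => ?_
  obtain ⟨μ, hμD, hμ⟩ := not_bddAbove_iff.mp hunb (M - c)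
  refine ⟨_, hκ.extensive _ hDL (Or.inl hμD), fun ω => ?_⟩
  have := le_of_abs_le (hM ω)
  simp only [Pi.sub_apply]
  linarith

/-- if `κ(G)` is always closed under dominance, `L⁺ ⊆ D` and there is a
gamble `f` with `f - μ ∈ D` for all real `μ`, then `E_κ(D) = L`; consequently, if
`E_κ(D) ≠ L` then for every gamble `f` the set `{μ : f - μ ∈ D}` is nonempty and
bounded above, so `P_D(f)` is a real number. -/
theorem stmt16 {Ω : Type*} [Nonempty Ω] (κ : Set (Ω → ℝ) → Set (Ω → ℝ))
    (hκ : IsClosureOp Ω κ) (hdom : ∀ G ⊆ Gambles Ω, ClosedUnderDominance (κ G))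
    (D : Set (Ω → ℝ)) (hD : D ⊆ Gambles Ω) (hL : Lpos Ω ⊆ D) :
    ((∃ f ∈ Gambles Ω, ∀ μ : ℝ, (f - fun _ => μ) ∈ D) → natExt κ D = Gambles Ω) ∧
      (natExt κ D ≠ Gambles Ω →
        ∀ f ∈ Gambles Ω, {μ : ℝ | (f - fun _ => μ) ∈ D}.Nonempty ∧
          BddAbove {μ : ℝ | (f - fun _ => μ) ∈ D}) := by
  refine ⟨fun ⟨f, hf, hall⟩ => ?_, fun hne f hf => ⟨?_, ?_⟩⟩
  · refine natExt_eq_gambles_of_not_bddAbove hκ hdom hD hf ?_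
    rw [show {μ : ℝ | (f - fun _ => μ) ∈ D} = univ from eq_univ_of_forall hall]
    exact not_bddAbove_univ
  · obtain ⟨μ, hμ⟩ := exists_sub_const_mem_Lpos hf
    exact ⟨μ, hL hμ⟩
  · by_contra hunb
    exact hne (natExt_eq_gambles_of_not_bddAbove hκ hdom hD hf hunb)
end
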